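/- arXiv:2603.01350 — 8 statements merged into one kernel-verified Lean document; each statement's English description precedes it below -/
import Mathlib

section
/- There exists a unique family of Laurent polynomials ζ_{x,y} ∈ ℤ[t,t^{-1}], indexed by pairs x ≤ y in P, such that ζ_{x,x} = 1 for all x, ζ_{x,y} ∈ t^{-1}·ℤ[t^{-1}] whenever x < y, and for all x ≤ y one has ∑_{x ≤ z ≤ y} b_{x,z}·ζ_{z,y} = bar(ζ_{x,y}). -/
open LaurentPolynomial Finset


namespace LusztigAux

/-- strictly negative part of a Laurent polynomial -/
noncomputable def negPart (f : LaurentPolynomial ℤ) : LaurentPolynomial ℤ :=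
  AddMonoidAlgebra.ofCoeff (Finsupp.filter (fun n => n < 0) f.coeff)

lemma negPart_apply (f : LaurentPolynomial ℤ) (n : ℤ) :
    (negPart f).coeff n = if n < 0 then f.coeff n else 0 := by
  simp [negPart, Finsupp.filter_apply, AddMonoidAlgebra.coeff_ofCoeff]

lemma invert_negPart (f : LaurentPolynomial ℤ) (hf : invert f = -f) :
    invert (-(negPart f)) - (-(negPart f)) = f := by
  have h0 : ∀ n : ℤ, f.coeff (-n) = - f.coeff n := fun n => by
    have := congrArg (fun g : LaurentPolynomial ℤ => g.coeff n) hf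
    simpa [AddMonoidAlgebra.coeff_neg] using this
  have hz : f.coeff 0 = 0 := by
    have := h0 0
    simp at this
    omega
  ext n
  have h1 : (invert (-(negPart f)) - (-(negPart f))).coeff n
      = -((negPart f).coeff (-n)) + (negPart f).coeff n := by
    simp only [AddMonoidAlgebra.coeff_sub, AddMonoidAlgebra.coeff_neg, Finsupp.sub_apply,
      Finsupp.neg_apply, invert_apply]
    ring
  rw [h1, negPart_apply, negPart_apply]
  rcases lt_trichotomy n 0 with h | h | h
  · simp [h, not_lt.2 (by omega : (0:ℤ) ≤ -n), not_lt.2 h.le]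
  · simp [h, hz]
  · simp [h, not_lt.2 h.le, h0 n]

lemma eq_of_neg_support (ζ ζ' : LaurentPolynomial ℤ)
    (h : ∀ n : ℤ, 0 ≤ n → ζ.coeff n = 0) (h' : ∀ n : ℤ, 0 ≤ n → ζ'.coeff n = 0)
    (heq : invert ζ - ζ = invert ζ' - ζ') : ζ = ζ' := by
  have hsub : invert (ζ - ζ') = ζ - ζ' := by
    rw [map_sub]; linear_combination heq
  ext n
  rcases le_or_gt 0 n with hn | hn
  · rw [h n hn, h' n hn]
  · have h1 : ζ.coeff n - ζ'.coeff n = (ζ - ζ').coeff n := by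
      rw [AddMonoidAlgebra.coeff_sub, Finsupp.sub_apply]
    have h2 : (ζ - ζ').coeff n = (ζ - ζ').coeff (-n) := by
      conv_lhs => rw [← hsub]
      rw [invert_apply]
    have h3 : (ζ - ζ').coeff (-n) = 0 := by
      rw [AddMonoidAlgebra.coeff_sub, Finsupp.sub_apply, h (-n) (by omega), h' (-n) (by omega)]; ring
    have h4 := h1.trans (h2.trans h3)
    omega

lemma exists_poly (f : LaurentPolynomial ℤ) (h : ∀ n : ℤ, 0 ≤ n → f.coeff n = 0) :
    ∃ p : Polynomial ℤ, p.coeff 0 = 0 ∧ f = invert p.toLaurent := by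
  refine ⟨Polynomial.ofFinsupp (AddMonoidAlgebra.ofCoeff
    (Finsupp.comapDomain (Nat.cast : ℕ → ℤ) (invert f).coeff Nat.cast_injective.injOn)), ?_, ?_⟩
  · rw [Polynomial.coeff_ofFinsupp, AddMonoidAlgebra.coeff_ofCoeff, Finsupp.comapDomain_apply]
    simpa [invert_apply] using h 0 le_rfl
  · have hsupp : ↑(invert f).coeff.support ⊆ Set.range (Nat.cast : ℕ → ℤ) := by
      intro n hn
      have hn' : (invert f).coeff n ≠ 0 := by simpa using hn
      have h0 : 0 ≤ n := by
        by_contra hneg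
        exact hn' (by rw [invert_apply]; exact h (-n) (by omega))
      exact Set.mem_range.2 ⟨n.toNat, by omega⟩
    have : Polynomial.toLaurent
        (Polynomial.ofFinsupp (AddMonoidAlgebra.ofCoeff
          (Finsupp.comapDomain (Nat.cast : ℕ → ℤ) (invert f).coeff Nat.cast_injective.injOn)))
        = invert f := by
      rw [Polynomial.toLaurent_apply]
      exact AddMonoidAlgebra.mapDomain_comapDomain (f := (Nat.cast : ℕ → ℤ)) hsupp Nat.cast_injective
    rw [this]
    exact (involutive_invert f).symm

lemma invert_toLaurent_coeff_zero (p : Polynomial ℤ) (hp : p.coeff 0 = 0)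
    (n : ℤ) (hn : 0 ≤ n) : (invert p.toLaurent).coeff n = 0 := by
  rw [invert_apply]
  show (Finsupp.mapDomain (Nat.cast : ℕ → ℤ) p.toFinsupp.coeff) (-n) = 0
  rcases eq_or_lt_of_le hn with rfl | hn'
  · rw [show (-(0:ℤ)) = ((0:ℕ) : ℤ) by simp,
      Finsupp.mapDomain_apply Nat.cast_injective]
    exact hp
  · apply Finsupp.mapDomain_notin_range
    rintro ⟨m, hm⟩
    omega


section Rec

variable {P : Type*} [PartialOrder P] [LocallyFiniteOrder P] [DecidableEq P]

noncomputable def zetaAux (b : P → P → LaurentPolynomial ℤ) :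
    ℕ → P → P → LaurentPolynomial ℤ
  | 0, x, y => if x = y then 1 else 0
  | n+1, x, y => if x = y then 1 else
      -(negPart (∑ z ∈ Finset.Ioc x y, b x z * zetaAux b n z y))

lemma zetaAux_diag (b : P → P → LaurentPolynomial ℤ) (n : ℕ) (x : P) :
    zetaAux b n x x = 1 := by cases n <;> simp [zetaAux]

lemma zetaAux_succ_of_lt (b : P → P → LaurentPolynomial ℤ) (n : ℕ) {x y : P} (hxy : x < y) :
    zetaAux b (n+1) x y =
      -(negPart (∑ z ∈ Finset.Ioc x y, b x z * zetaAux b n z y)) := by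
  simp [zetaAux, hxy.ne]

omit [DecidableEq P] in
lemma card_Icc_lt {x z y : P} (hxz : x < z) (hzy : z ≤ y) :
    (Finset.Icc z y).card < (Finset.Icc x y).card := by
  apply Finset.card_lt_card
  constructor
  · exact Finset.Icc_subset_Icc_left hxz.le
  · intro hsub
    have := hsub (Finset.mem_Icc.2 ⟨le_rfl, hxz.le.trans hzy⟩)
    exact absurd (Finset.mem_Icc.1 this).1 hxz.not_ge

lemma zetaAux_stable (b : P → P → LaurentPolynomial ℤ) :
    ∀ n : ℕ, ∀ x y : P, x ≤ y → (Finset.Icc x y).card ≤ n + 1 →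
      zetaAux b (n+1) x y = zetaAux b n x y := by
  intro n
  induction n with
  | zero =>
    intro x y hxy hcard
    have hx : x ∈ Finset.Icc x y := Finset.mem_Icc.2 ⟨le_rfl, hxy⟩
    have hy : y ∈ Finset.Icc x y := Finset.mem_Icc.2 ⟨hxy, le_rfl⟩
    have : x = y := Finset.card_le_one.1 hcard x hx y hy
    subst this
    simp [zetaAux_diag]
  | succ m IH =>
    intro x y hxy hcard
    rcases eq_or_lt_of_le hxy with rfl | hlt
    · simp [zetaAux_diag]
    · rw [zetaAux_succ_of_lt b (m+1) hlt, zetaAux_succ_of_lt b m hlt]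
      congr 2
      apply Finset.sum_congr rfl
      intro z hz
      obtain ⟨hxz, hzy⟩ := Finset.mem_Ioc.1 hz
      rw [IH z y hzy (by have := card_Icc_lt hxz hzy; omega)]

lemma zetaAux_eq_of_le (b : P → P → LaurentPolynomial ℤ) {n m : ℕ} {x y : P}
    (hxy : x ≤ y) (hcard : (Finset.Icc x y).card ≤ n + 1) (hnm : n ≤ m) :
    zetaAux b m x y = zetaAux b n x y := by
  induction m, hnm using Nat.le_induction with
  | base => rfl
  | succ k hk IHk =>
    rw [zetaAux_stable b k x y hxy (hcard.trans (by omega)), IHk]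

noncomputable def zetaF (b : P → P → LaurentPolynomial ℤ) (x y : P) : LaurentPolynomial ℤ :=
  zetaAux b (Finset.Icc x y).card x y

lemma zetaAux_eq_zetaF (b : P → P → LaurentPolynomial ℤ) {n : ℕ} {x y : P}
    (hxy : x ≤ y) (hcard : (Finset.Icc x y).card ≤ n + 1) :
    zetaAux b n x y = zetaF b x y := by
  unfold zetaF
  rcases le_total n (Finset.Icc x y).card with h | h
  · exact (zetaAux_eq_of_le b hxy hcard h).symm
  · exact zetaAux_eq_of_le b hxy (by omega) h

lemma zetaF_diag (b : P → P → LaurentPolynomial ℤ) (x : P) : zetaF b x x = 1 :=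
  zetaAux_diag b _ x

lemma zetaF_of_lt (b : P → P → LaurentPolynomial ℤ) {x y : P} (hxy : x < y) :
    zetaF b x y = -(negPart (∑ z ∈ Finset.Ioc x y, b x z * zetaF b z y)) := by
  have hpos : 0 < (Finset.Icc x y).card :=
    Finset.card_pos.2 ⟨x, Finset.mem_Icc.2 ⟨le_rfl, hxy.le⟩⟩
  obtain ⟨k, hk⟩ : ∃ k, (Finset.Icc x y).card = k + 1 :=
    ⟨(Finset.Icc x y).card - 1, by omega⟩
  have h1 : zetaF b x y = zetaAux b (k+1) x y := by unfold zetaF; rw [hk]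
  rw [h1, zetaAux_succ_of_lt b k hxy]
  congr 2
  apply Finset.sum_congr rfl
  intro z hz
  obtain ⟨hxz, hzy⟩ := Finset.mem_Ioc.1 hz
  rw [zetaAux_eq_zetaF b (n := k) hzy (by have := card_Icc_lt hxz hzy; omega)]

lemma zetaF_neg_coeff (b : P → P → LaurentPolynomial ℤ) {x y : P} (hxy : x < y)
    (n : ℤ) (hn : 0 ≤ n) : (zetaF b x y).coeff n = 0 := by
  rw [zetaF_of_lt b hxy, AddMonoidAlgebra.coeff_neg, Finsupp.neg_apply, negPart_apply, if_neg (not_lt.2 hn), neg_zero]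

omit [DecidableEq P] in
lemma sum_Ioc_Icc_comm {M : Type*} [AddCommMonoid M] (x y : P) (F : P → P → M) :
    ∑ z ∈ Finset.Ioc x y, ∑ w ∈ Finset.Icc z y, F z w =
    ∑ w ∈ Finset.Icc x y, ∑ z ∈ Finset.Ioc x w, F z w := by
  classical
  have h1 : ∀ z ∈ Finset.Ioc x y, ∑ w ∈ Finset.Icc z y, F z w
      = ∑ w ∈ Finset.Icc x y, if z ≤ w then F z w else 0 := by
    intro z hz
    obtain ⟨hxz, hzy⟩ := Finset.mem_Ioc.1 hz
    calc ∑ w ∈ Finset.Icc z y, F z w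
        = ∑ w ∈ Finset.Icc z y, if z ≤ w then F z w else 0 :=
          Finset.sum_congr rfl fun w hw => (if_pos (Finset.mem_Icc.1 hw).1).symm
      _ = ∑ w ∈ Finset.Icc x y, if z ≤ w then F z w else 0 := by
          apply Finset.sum_subset (Finset.Icc_subset_Icc_left hxz.le)
          intro w hw hnw
          refine if_neg fun hzw => hnw (Finset.mem_Icc.2 ⟨hzw, (Finset.mem_Icc.1 hw).2⟩)
  have h2 : ∀ w ∈ Finset.Icc x y, ∑ z ∈ Finset.Ioc x y, (if z ≤ w then F z w else 0)
      = ∑ z ∈ Finset.Ioc x w, F z w := by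
    intro w hw
    obtain ⟨hxw, hwy⟩ := Finset.mem_Icc.1 hw
    calc ∑ z ∈ Finset.Ioc x y, (if z ≤ w then F z w else 0)
        = ∑ z ∈ Finset.Ioc x w, (if z ≤ w then F z w else 0) := by
          symm
          apply Finset.sum_subset (Finset.Ioc_subset_Ioc_right hwy)
          intro z hz hnz
          refine if_neg fun hzw => hnz (Finset.mem_Ioc.2 ⟨(Finset.mem_Ioc.1 hz).1, hzw⟩)
      _ = ∑ z ∈ Finset.Ioc x w, F z w :=
          Finset.sum_congr rfl fun z hz => if_pos (Finset.mem_Ioc.1 hz).2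
  rw [Finset.sum_congr rfl h1, Finset.sum_comm, Finset.sum_congr rfl h2]

lemma main_eq (b : P → P → LaurentPolynomial ℤ)
    (hb_diag : ∀ x, b x x = 1)
    (hb_inv : ∀ x y, x ≤ y →
      ∑ z ∈ Finset.Icc x y, (invert (b x z)) * b z y = if x = y then 1 else 0) :
    ∀ k : ℕ, ∀ x y : P, x ≤ y → (Finset.Icc x y).card = k →
      ∑ z ∈ Finset.Icc x y, b x z * zetaF b z y = invert (zetaF b x y) := by
  intro k
  induction k using Nat.strong_induction_on with
  | _ k IH =>
  intro x y hxy hk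
  rcases eq_or_lt_of_le hxy with rfl | hlt
  · rw [Finset.Icc_self, Finset.sum_singleton, hb_diag, zetaF_diag, one_mul, map_one]
  · set A := ∑ z ∈ Finset.Ioc x y, b x z * zetaF b z y with hA_def
    have hIH : ∀ z ∈ Finset.Ioc x y, ∑ w ∈ Finset.Icc z y, b z w * zetaF b w y
        = invert (zetaF b z y) := by
      intro z hz
      obtain ⟨hxz, hzy⟩ := Finset.mem_Ioc.1 hz
      exact IH _ (hk ▸ card_Icc_lt hxz hzy) z y hzy rfl
    have step4 : ∑ w ∈ Finset.Icc x y, b x w * zetaF b w y = zetaF b x y + A := by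
      rw [Finset.Icc_eq_cons_Ioc hxy, Finset.sum_cons, hb_diag, one_mul]
    have step2 : invert A = ∑ w ∈ Finset.Icc x y,
        (∑ z ∈ Finset.Ioc x w, invert (b x z) * b z w) * zetaF b w y := by
      rw [hA_def, map_sum]
      have e1 : ∀ z ∈ Finset.Ioc x y, invert (b x z * zetaF b z y)
          = ∑ w ∈ Finset.Icc z y, invert (b x z) * (b z w * zetaF b w y) := by
        intro z hz
        rw [map_mul, ← hIH z hz, Finset.mul_sum]
      rw [Finset.sum_congr rfl e1, sum_Ioc_Icc_comm]
      apply Finset.sum_congr rfl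
      intro w hw
      rw [Finset.sum_mul]
      exact Finset.sum_congr rfl fun z hz => by ring
    have key : ∀ w ∈ Finset.Icc x y, ∑ z ∈ Finset.Ioc x w, invert (b x z) * b z w
        = (if x = w then 1 else 0) - b x w := by
      intro w hw
      have hxw : x ≤ w := (Finset.mem_Icc.1 hw).1
      have h := hb_inv x w hxw
      rw [Finset.Icc_eq_cons_Ioc hxw, Finset.sum_cons] at h
      simp only [hb_diag, map_one, one_mul] at h
      exact eq_sub_of_add_eq' h
    have step3 : invert A = zetaF b x y - ∑ w ∈ Finset.Icc x y, b x w * zetaF b w y := by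
      rw [step2, Finset.sum_congr rfl fun w hw => by rw [key w hw]]
      simp_rw [sub_mul, ite_mul, one_mul, zero_mul]
      rw [Finset.sum_sub_distrib, Finset.sum_ite_eq, if_pos (Finset.mem_Icc.2 ⟨le_rfl, hxy⟩)]
    have hAanti : invert A = -A := by
      rw [step3, step4]; ring
    have hfinal := invert_negPart A hAanti
    rw [← zetaF_of_lt b hlt] at hfinal
    rw [step4]
    linear_combination -hfinal

end Rec

end LusztigAux

/-- Lusztig's Lemma, in the form used in the paper: given a poset `P` with finite
intervals and a family `b_{x,y} ∈ ℤ[t,t⁻¹]` (for `x ≤ y`) with `b_{x,x} = 1` and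
`∑_{x≤z≤y} bar(b_{x,z}) b_{z,y} = δ_{x,y}`, there is a unique family `ζ_{x,y}` with
`ζ_{x,x} = 1`, `ζ_{x,y} ∈ t⁻¹ℤ[t⁻¹]` for `x < y`, and
`∑_{x≤z≤y} b_{x,z} ζ_{z,y} = bar(ζ_{x,y})`.  Here the bar involution `t ↦ t⁻¹` of
`ℤ[t,t⁻¹]` is `LaurentPolynomial.invert`, and membership in `t⁻¹ℤ[t⁻¹]` is expressed as
being the image under `bar` of a polynomial in `t` with zero constant term. -/
theorem lusztig_lemma {P : Type*} [PartialOrder P] [LocallyFiniteOrder P] [DecidableEq P]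
    (b : P → P → LaurentPolynomial ℤ)
    (hb_diag : ∀ x, b x x = 1)
    (hb_inv : ∀ x y, x ≤ y →
      ∑ z ∈ Finset.Icc x y, (LaurentPolynomial.invert (b x z)) * b z y =
        if x = y then 1 else 0) :
    ∃ ζ : P → P → LaurentPolynomial ℤ,
      ((∀ x, ζ x x = 1) ∧
        (∀ x y, x < y → ∃ p : Polynomial ℤ,
          p.coeff 0 = 0 ∧ ζ x y = LaurentPolynomial.invert p.toLaurent) ∧
        (∀ x y, x ≤ y →
          ∑ z ∈ Finset.Icc x y, b x z * ζ z y = LaurentPolynomial.invert (ζ x y))) ∧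
      (∀ ζ' : P → P → LaurentPolynomial ℤ,
        ((∀ x, ζ' x x = 1) ∧
          (∀ x y, x < y → ∃ p : Polynomial ℤ,
            p.coeff 0 = 0 ∧ ζ' x y = LaurentPolynomial.invert p.toLaurent) ∧
          (∀ x y, x ≤ y →
            ∑ z ∈ Finset.Icc x y, b x z * ζ' z y = LaurentPolynomial.invert (ζ' x y))) →
        ∀ x y, x ≤ y → ζ' x y = ζ x y) := by
  refine ⟨LusztigAux.zetaF b, ⟨fun x => LusztigAux.zetaF_diag b x, fun x y hxy =>
      LusztigAux.exists_poly _ (fun n hn => LusztigAux.zetaF_neg_coeff b hxy n hn),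
      fun x y hxy => LusztigAux.main_eq b hb_diag hb_inv _ x y hxy rfl⟩, ?_⟩
  rintro ζ' ⟨h1', h2', h3'⟩
  have huniq : ∀ k : ℕ, ∀ x y : P, x ≤ y → (Finset.Icc x y).card = k →
      ζ' x y = LusztigAux.zetaF b x y := by
    intro k
    induction k using Nat.strong_induction_on with
    | _ k IH =>
    intro x y hxy hk
    rcases eq_or_lt_of_le hxy with rfl | hlt
    · rw [h1' x, LusztigAux.zetaF_diag]
    · have hIoc : ∀ z ∈ Finset.Ioc x y, ζ' z y = LusztigAux.zetaF b z y := by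
        intro z hz
        obtain ⟨hxz, hzy⟩ := Finset.mem_Ioc.1 hz
        exact IH _ (hk ▸ LusztigAux.card_Icc_lt hxz hzy) z y hzy rfl
      have e1 : LaurentPolynomial.invert (ζ' x y) - ζ' x y
          = ∑ z ∈ Finset.Ioc x y, b x z * LusztigAux.zetaF b z y := by
        have h := h3' x y hxy
        rw [Finset.Icc_eq_cons_Ioc hxy, Finset.sum_cons, hb_diag, one_mul,
          Finset.sum_congr rfl (fun z hz => by rw [hIoc z hz])] at h
        linear_combination -h
      have e2 : LaurentPolynomial.invert (LusztigAux.zetaF b x y) - LusztigAux.zetaF b x y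
          = ∑ z ∈ Finset.Ioc x y, b x z * LusztigAux.zetaF b z y := by
        have h := LusztigAux.main_eq b hb_diag hb_inv _ x y hxy rfl
        rw [Finset.Icc_eq_cons_Ioc hxy, Finset.sum_cons, hb_diag, one_mul] at h
        linear_combination -h
      have hneg' : ∀ n : ℤ, 0 ≤ n → (ζ' x y).coeff n = 0 := by
        intro n hn
        obtain ⟨p, hp0, hp⟩ := h2' x y hlt
        rw [hp]
        exact LusztigAux.invert_toLaurent_coeff_zero p hp0 n hn
      exact LusztigAux.eq_of_neg_support _ _ hneg'
        (fun n hn => LusztigAux.zetaF_neg_coeff b hlt n hn) (e1.trans e2.symm)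
  exact fun x y hxy => huniq _ x y hxy rfl
end

section
/- For all integers 0 ≤ k ≤ n, X_{k,n} = (−1)^{n−k}·binom(n+k, 2k). -/
/-- `C_{i,m} = binom(m,i) - binom(m,i-2)`, with the convention that `binom(m,j) = 0` for `j < 0`. -/
def Ccoef (i m : ℕ) : ℤ :=
  (m.choose i : ℤ) - (if 2 ≤ i then (m.choose (i - 2) : ℤ) else 0)



/-- Generalized binomial coefficient with integer top. -/
def B (x : ℤ) (r : ℕ) : ℤ :=
  if 0 ≤ x then (x.toNat.choose r : ℤ) else (-1)^r * ((((r : ℤ) - 1 - x).toNat.choose r : ℤ))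

lemma B_natCast (n r : ℕ) : B n r = (n.choose r : ℤ) := by simp [B]

lemma B_zero_right (x : ℤ) : B x 0 = 1 := by
  unfold B; split <;> simp

lemma B_eq_zero (x : ℤ) (r : ℕ) (h0 : 0 ≤ x) (h : x < r) : B x r = 0 := by
  unfold B
  rw [if_pos h0]
  norm_cast
  apply Nat.choose_eq_zero_of_lt
  omega

lemma B_pascal (x : ℤ) (r : ℕ) : B (x+1) (r+1) = B x (r+1) + B x r := by
  rcases le_or_gt 0 x with hx | hx
  · unfold B
    rw [if_pos hx, if_pos hx, if_pos (by omega)]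
    have : (x+1).toNat = x.toNat + 1 := by omega
    rw [this, Nat.choose_succ_succ]
    push_cast; ring
  · rcases eq_or_lt_of_le (show x ≤ -1 by omega) with h1 | h1
    · subst h1
      unfold B
      norm_num
      rw [pow_succ]; ring
    · unfold B
      rw [if_neg (by omega), if_neg (by omega), if_neg (by omega)]
      push_cast
      have h2 : ((r:ℤ)+1-1-x).toNat = ((r:ℤ)-1-x).toNat + 1 := by omega
      have h3 : ((r:ℤ)+1-1-(x+1)).toNat = ((r:ℤ)-1-x).toNat := by omega
      rw [h2, h3, Nat.choose_succ_succ]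
      push_cast
      ring

open Finset in
lemma alt_sum_succ (M : ℕ) (f : ℕ → ℤ) :
    ∑ i ∈ range (M+2), (-1)^i * ((M+1).choose i : ℤ) * f i
      = ∑ i ∈ range (M+1), (-1)^i * (M.choose i : ℤ) * (f i - f (i+1)) := by
  have h1 : ∑ i ∈ range (M+2), (-1)^i * ((M+1).choose i : ℤ) * f i
      = (∑ i ∈ range (M+1), (-1)^(i+1) * ((M.choose i : ℤ) + (M.choose (i+1) : ℤ)) * f (i+1)) + f 0 := by
    rw [Finset.sum_range_succ' (fun i => (-1)^i * ((M+1).choose i : ℤ) * f i) (M+1)]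
    simp [Nat.choose_succ_succ]
  have h2 : ∑ i ∈ range (M+1), (-1)^(i+1) * (M.choose (i+1) : ℤ) * f (i+1)
      = (∑ i ∈ range (M+2), (-1)^i * (M.choose i : ℤ) * f i) - f 0 := by
    rw [Finset.sum_range_succ' (fun i => (-1)^i * (M.choose i : ℤ) * f i) (M+1)]
    simp
  have h3 : ∑ i ∈ range (M+2), (-1)^i * (M.choose i : ℤ) * f i
      = ∑ i ∈ range (M+1), (-1)^i * (M.choose i : ℤ) * f i := by
    rw [Finset.sum_range_succ]
    simp [Nat.choose_eq_zero_of_lt (Nat.lt_succ_self M)]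
  calc ∑ i ∈ range (M+2), (-1)^i * ((M+1).choose i : ℤ) * f i
      = (∑ i ∈ range (M+1), ((-1)^(i+1) * (M.choose i : ℤ) * f (i+1)
          + (-1)^(i+1) * (M.choose (i+1) : ℤ) * f (i+1))) + f 0 := by
        rw [h1]; congr 1; apply Finset.sum_congr rfl; intros; ring
    _ = (∑ i ∈ range (M+1), (-1)^(i+1) * (M.choose i : ℤ) * f (i+1))
          + (∑ i ∈ range (M+1), (-1)^(i+1) * (M.choose (i+1) : ℤ) * f (i+1)) + f 0 := by
        rw [Finset.sum_add_distrib]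
    _ = ∑ i ∈ range (M+1), (-1)^i * (M.choose i : ℤ) * (f i - f (i+1)) := by
        rw [h2, h3]
        have h4 : ∑ i ∈ range (M+1), (-1)^i * (M.choose i : ℤ) * (f i - f (i+1))
            = ∑ i ∈ range (M+1), ((-1)^i * (M.choose i : ℤ) * f i
              + (-1)^(i+1) * (M.choose i : ℤ) * f (i+1)) := by
          apply Finset.sum_congr rfl; intros; ring
        rw [h4, Finset.sum_add_distrib]
        ring

open Finset in
lemma diff_sum : ∀ (M r : ℕ), r < M → ∀ (x : ℤ),
    ∑ i ∈ range (M+1), (-1)^i * (M.choose i : ℤ) * B (x - i) r = 0 := by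
  intro M
  induction M with
  | zero => omega
  | succ M ih =>
    intro r hr x
    rw [show M + 1 + 1 = M + 2 from rfl,
      alt_sum_succ M (fun i => B (x - i) r)]
    rcases r with _ | s
    · simp [B_zero_right]
    · have key : ∀ i : ℕ, B (x - i) (s+1) - B (x - (i+1)) (s+1) = B ((x-1) - i) s := by
        intro i
        have h := B_pascal (x - 1 - i) s
        have e : x - 1 - (i:ℤ) + 1 = x - i := by ring
        rw [e] at h
        have e2 : x - ((i:ℤ)+1) = x - 1 - i := by ring
        rw [e2]
        linarith
      calc ∑ i ∈ range (M+1), (-1)^i * (M.choose i : ℤ) * (B (x - i) (s+1) - B (x - (i+1)) (s+1))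
          = ∑ i ∈ range (M+1), (-1)^i * (M.choose i : ℤ) * B ((x-1) - i) s := by
            apply Finset.sum_congr rfl; intro i _; rw [key i]
        _ = 0 := ih s (by omega) (x-1)

open Finset

/-- symmetry of Ccoef -/
lemma Ccoef_symm (j m : ℕ) (hj : 2 * j ≤ m + 1) :
    Ccoef (m + 2 - j) m = -Ccoef j m := by
  unfold Ccoef
  have h1 : m + 2 - j - 2 = m - j := by omega
  rw [if_pos (by omega), h1]
  rcases le_or_gt 2 j with h2 | h2
  · rw [if_pos h2]
    have e1 : m.choose (m + 2 - j) = m.choose (j - 2) := by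
      rw [show m + 2 - j = m - (j - 2) by omega]
      exact Nat.choose_symm (by omega)
    have e2 : m.choose (m - j) = m.choose j := Nat.choose_symm (by omega)
    rw [e1, e2]; ring
  · rw [if_neg (by omega)]
    have e1 : m.choose (m + 2 - j) = 0 := Nat.choose_eq_zero_of_lt (by omega)
    have e2 : m.choose (m - j) = m.choose j := Nat.choose_symm (by omega)
    rw [e1, e2]; push_cast; ring

/-- the full alternating sum with Ccoef weights vanishes -/
lemma full_sum (n k : ℕ) (hk : k ≤ n) :
    ∑ i ∈ range (2*n+4), (-1)^i * Ccoef i (2*n+1) * B ((n:ℤ)+1+k - i) (2*k) = 0 := by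
  set m := 2*n+1 with hm
  have split : ∀ i : ℕ, (-1:ℤ)^i * Ccoef i m * B ((n:ℤ)+1+k - i) (2*k)
      = (-1)^i * (m.choose i : ℤ) * B ((n:ℤ)+1+k - i) (2*k)
        - (-1)^i * (if 2 ≤ i then (m.choose (i-2) : ℤ) else 0) * B ((n:ℤ)+1+k - i) (2*k) := by
    intro i; unfold Ccoef; ring
  rw [Finset.sum_congr rfl (fun i _ => split i), Finset.sum_sub_distrib]
  have hA : ∑ i ∈ range (2*n+4), (-1)^i * (m.choose i : ℤ) * B ((n:ℤ)+1+k - i) (2*k) = 0 := by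
    rw [show 2*n+4 = (m+1) + 2 by omega, Finset.sum_range_succ, Finset.sum_range_succ]
    rw [Nat.choose_eq_zero_of_lt (by omega), Nat.choose_eq_zero_of_lt (by omega)]
    simpa using diff_sum m (2*k) (by omega) ((n:ℤ)+1+k)
  have hB : ∑ i ∈ range (2*n+4), (-1)^i * (if 2 ≤ i then (m.choose (i-2) : ℤ) else 0) * B ((n:ℤ)+1+k - i) (2*k) = 0 := by
    rw [Finset.sum_range_succ' _ (2*n+3), Finset.sum_range_succ' _ (2*n+2)]
    simp only [if_neg (by omega : ¬ 2 ≤ 1), if_neg (by omega : ¬ 2 ≤ 0)]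
    have : ∀ i ∈ range (2*n+2), (-1:ℤ)^(i+1+1) * (if 2 ≤ i+1+1 then (m.choose (i+1+1-2) : ℤ) else 0) * B ((n:ℤ)+1+k - ↑(i+1+1)) (2*k)
        = (-1)^i * (m.choose i : ℤ) * B (((n:ℤ)+1+k-2) - i) (2*k) := by
      intro i _
      rw [if_pos (by omega)]
      have e : (n:ℤ)+1+k - ↑(i+1+1) = ((n:ℤ)+1+k-2) - i := by push_cast; ring
      rw [e, show i+1+1-2 = i by omega]
      ring
    rw [Finset.sum_congr rfl this]
    have := diff_sum m (2*k) (by omega) ((n:ℤ)+1+k-2)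
    rw [show m + 1 = 2*n+2 by omega] at this
    rw [this]
    ring
  rw [hA, hB]; ring

lemma term_symm (n k j : ℕ) (hk : k ≤ n) (hj : j ≤ n + 1 - k) :
    (-1:ℤ)^(2*n+3-j) * Ccoef (2*n+3-j) (2*n+1) * B ((n:ℤ)+1+k - ↑(2*n+3-j)) (2*k)
      = (-1)^j * Ccoef j (2*n+1) * B ((n:ℤ)+1+k - j) (2*k) := by
  have hsign : (-1:ℤ)^(2*n+3-j) = -(-1)^j := by
    rcases Nat.even_or_odd j with h2 | h2
    · have h2' := Nat.even_iff.mp h2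
      have ho : Odd (2*n+3-j) := Nat.odd_iff.mpr (by omega)
      rw [Even.neg_one_pow h2, Odd.neg_one_pow ho]
    · have h2' := Nat.odd_iff.mp h2
      have he : Even (2*n+3-j) := Nat.even_iff.mpr (by omega)
      rw [Odd.neg_one_pow h2, Even.neg_one_pow he]
      norm_num
  have hC : Ccoef (2*n+3-j) (2*n+1) = -Ccoef j (2*n+1) := by
    rw [show 2*n+3-j = (2*n+1) + 2 - j by omega]
    exact Ccoef_symm j (2*n+1) (by omega)
  have hBe : B ((n:ℤ)+1+k - ↑(2*n+3-j)) (2*k) = B ((n:ℤ)+1+k - j) (2*k) := by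
    have hcast : ((2*n+3-j : ℕ) : ℤ) = 2*(n:ℤ)+3-j := by omega
    rw [hcast]
    unfold B
    rw [if_neg (by omega), if_pos (by omega)]
    rw [show ((2*k:ℕ):ℤ) - 1 - ((n:ℤ)+1+↑k - (2*(n:ℤ)+3-↑j)) = ((n:ℤ)+1+k-j) by push_cast; ring]
    rw [show ((-1:ℤ))^(2*k) = 1 by rw [pow_mul]; norm_num]
    ring
  rw [hsign, hC, hBe]
  ring

open Finset in
lemma key_sum (n k : ℕ) (hk : k ≤ n) :
    ∑ i ∈ range (n+2-k), (-1:ℤ)^i * Ccoef i (2*n+1) * B ((n:ℤ)+1+k - i) (2*k) = 0 := by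
  set T : ℕ → ℤ := fun i => (-1:ℤ)^i * Ccoef i (2*n+1) * B ((n:ℤ)+1+k - i) (2*k) with hT
  have hfull : ∑ i ∈ range (2*n+4), T i = 0 := full_sum n k hk
  have hsplit1 : ∑ i ∈ range (2*n+4), T i
      = ∑ i ∈ range (n+2-k), T i + ∑ i ∈ Ico (n+2-k) (2*n+4), T i := by
    rw [range_eq_Ico, ← Finset.sum_Ico_consecutive _ (by omega : 0 ≤ n+2-k) (by omega : n+2-k ≤ 2*n+4), range_eq_Ico]
  have hsplit2 : ∑ i ∈ Ico (n+2-k) (2*n+4), T i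
      = ∑ i ∈ Ico (n+2-k) (n+2+k), T i + ∑ i ∈ Ico (n+2+k) (2*n+4), T i := by
    rw [← Finset.sum_Ico_consecutive _ (by omega : n+2-k ≤ n+2+k) (by omega : n+2+k ≤ 2*n+4)]
  have hmid : ∑ i ∈ Ico (n+2-k) (n+2+k), T i = 0 := by
    apply Finset.sum_eq_zero
    intro i hi
    rw [Finset.mem_Ico] at hi
    have hB0 : B ((n:ℤ)+1+k - i) (2*k) = 0 := by
      apply B_eq_zero _ _ (by omega) (by omega)
    simp [hT, hB0]
  have htail : ∑ i ∈ Ico (n+2+k) (2*n+4), T i = ∑ i ∈ range (n+2-k), T i := by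
    apply Finset.sum_nbij' (i := fun i => 2*n+3-i) (j := fun j => 2*n+3-j)
    · intro a ha; rw [Finset.mem_Ico] at ha; rw [Finset.mem_range]; omega
    · intro a ha; rw [Finset.mem_range] at ha; rw [Finset.mem_Ico]; omega
    · intro a ha; rw [Finset.mem_Ico] at ha; omega
    · intro a ha; rw [Finset.mem_range] at ha; omega
    · intro a ha
      rw [Finset.mem_Ico] at ha
      have := term_symm n k (2*n+3-a) hk (by omega)
      rw [show 2*n+3-(2*n+3-a) = a by omega] at this
      simp only [hT]
      exact this
  rw [hsplit1, hsplit2, hmid, htail] at hfull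
  linarith

open Finset in
lemma Y_rec (k n : ℕ) (hk : k ≤ n) :
    ∑ i ∈ Finset.Icc 1 (n+1-k), Ccoef i (2*n+1) * ((-1:ℤ)^(n+1-i-k) * ((n+1-i+k).choose (2*k) : ℤ))
      = -((-1:ℤ)^(n+1-k) * ((n+1+k).choose (2*k) : ℤ)) := by
  have hS := key_sum n k hk
  have hterm : ∀ i ∈ range (n+2-k),
      (-1:ℤ)^i * Ccoef i (2*n+1) * B ((n:ℤ)+1+k - i) (2*k)
        = (-1:ℤ)^(n+1-k) * (Ccoef i (2*n+1) * ((-1:ℤ)^(n+1-i-k) * ((n+1-i+k).choose (2*k) : ℤ))) := by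
    intro i hi
    rw [Finset.mem_range] at hi
    have hB : B ((n:ℤ)+1+k - i) (2*k) = ((n+1-i+k).choose (2*k) : ℤ) := by
      rw [show (n:ℤ)+1+k - i = ((n+1-i+k : ℕ) : ℤ) by omega, B_natCast]
    have hsq : (-1:ℤ)^(n+1-i-k) * (-1)^(n+1-i-k) = 1 := by
      rw [← pow_add]; exact Even.neg_one_pow ⟨n+1-i-k, rfl⟩
    rw [hB, show n+1-k = i + (n+1-i-k) by omega, pow_add]
    linear_combination (-((-1:ℤ)^i * Ccoef i (2*n+1) * (((n+1-i+k).choose (2*k)):ℤ))) * hsq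
  rw [Finset.sum_congr rfl hterm, ← Finset.mul_sum] at hS
  have hne : ((-1:ℤ))^(n+1-k) ≠ 0 := by
    apply pow_ne_zero; norm_num
  have hzero : ∑ i ∈ range (n+2-k),
      Ccoef i (2*n+1) * ((-1:ℤ)^(n+1-i-k) * ((n+1-i+k).choose (2*k) : ℤ)) = 0 :=
    (mul_eq_zero.mp hS).resolve_left hne
  rw [show n+2-k = (n+1-k)+1 by omega, Finset.sum_range_succ'] at hzero
  have h0 : Ccoef 0 (2*n+1) * ((-1:ℤ)^(n+1-0-k) * ((n+1-0+k).choose (2*k) : ℤ))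
      = (-1:ℤ)^(n+1-k) * ((n+1+k).choose (2*k) : ℤ) := by
    simp [Ccoef]
  rw [h0] at hzero
  have hIcc : ∑ i ∈ Finset.Icc 1 (n+1-k), Ccoef i (2*n+1) * ((-1:ℤ)^(n+1-i-k) * ((n+1-i+k).choose (2*k) : ℤ))
      = ∑ i ∈ range (n+1-k), Ccoef (i+1) (2*n+1) * ((-1:ℤ)^(n+1-(i+1)-k) * ((n+1-(i+1)+k).choose (2*k) : ℤ)) := by
    rw [← Finset.Ico_add_one_right_eq_Icc, Finset.sum_Ico_eq_sum_range]
    apply Finset.sum_congr (by congr 1)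
    intro i _
    rw [show 1 + i = i + 1 by omega]
  rw [hIcc]
  linarith

/-- Closed formula for the coefficients `X_{k,n}` of the dual canonical basis element
`L(k,2n)` of the split rank-one ι-quantum group: `X_{k,n} = (-1)^{n-k} binom(n+k, 2k)`. -/
theorem X_coeff_closed_formula (X : ℕ → ℕ → ℤ)
    (hXdiag : ∀ n, X n n = 1)
    (hXrec : ∀ k n, k ≤ n →
      X k (n + 1) = -∑ i ∈ Finset.Icc 1 (n + 1 - k), Ccoef i (2 * n + 1) * X k (n + 1 - i)) :
    ∀ k n, k ≤ n → X k n = (-1) ^ (n - k) * ((n + k).choose (2 * k) : ℤ) := by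
  intro k n hkn
  suffices H : ∀ N m, m ≤ N → ∀ k', k' ≤ m → X k' m = (-1:ℤ)^(m-k') * ((m+k').choose (2*k') : ℤ) from
    H n n le_rfl k hkn
  intro N
  induction N with
  | zero =>
    intro m hm k' hk'
    interval_cases m
    interval_cases k'
    simpa using hXdiag 0
  | succ N ih =>
    intro m hm k' hk'
    rcases Nat.lt_or_ge m (N+1) with h | h
    · exact ih m (by omega) k' hk'
    · have hm' : m = N+1 := by omega
      subst hm'
      rcases eq_or_lt_of_le hk' with he | hlt
      · subst he
        rw [hXdiag, show (N+1)+(N+1) = 2*(N+1) by ring, Nat.choose_self]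
        simp
      · have hk'N : k' ≤ N := by omega
        rw [hXrec k' N hk'N]
        have hsum : ∑ i ∈ Finset.Icc 1 (N+1-k'), Ccoef i (2*N+1) * X k' (N+1-i)
            = ∑ i ∈ Finset.Icc 1 (N+1-k'), Ccoef i (2*N+1) * ((-1:ℤ)^(N+1-i-k') * ((N+1-i+k').choose (2*k') : ℤ)) := by
          apply Finset.sum_congr rfl
          intro i hi; rw [Finset.mem_Icc] at hi
          rw [ih (N+1-i) (by omega) k' (by omega)]
        rw [hsum, Y_rec k' N hk'N, neg_neg]
end

section
/- For all integers 0 ≤ k ≤ n, Y_{k,n} = (−1)^{n−k}·binom(n+k+1, 2k+1). -/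
private def Aseq (r m N : ℕ) : ℤ :=
  ∑ j ∈ Finset.range (N + 1), (-1) ^ j * (m.choose j : ℤ) * ((r + N - j).choose r : ℤ)

private lemma Aseq_zero_right (r m : ℕ) : Aseq r m 0 = 1 := by
  simp [Aseq]

private lemma Aseq_zero (r N : ℕ) : Aseq r 0 N = ((r + N).choose r : ℤ) := by
  unfold Aseq
  rw [Finset.sum_eq_single 0]
  · simp
  · intro b _ hb
    rcases Nat.exists_eq_add_of_lt (Nat.pos_of_ne_zero hb) with ⟨c, rfl⟩
    simp [Nat.choose_zero_succ]
  · simp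

private lemma Aseq_succ (r m N : ℕ) :
    Aseq r (m + 1) (N + 1) = Aseq r m (N + 1) - Aseq r m N := by
  unfold Aseq
  rw [Finset.sum_range_succ' (fun j => (-1) ^ j * ((m + 1).choose j : ℤ) * ((r + (N + 1) - j).choose r : ℤ)) (N + 1),
    Finset.sum_range_succ' (fun j => (-1) ^ j * (m.choose j : ℤ) * ((r + (N + 1) - j).choose r : ℤ)) (N + 1),
    add_sub_right_comm, ← Finset.sum_sub_distrib]
  congr 1
  · refine Finset.sum_congr rfl fun i _ => ?_
    have h : r + (N + 1) - (i + 1) = r + N - i := by omega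
    rw [h, Nat.choose_succ_succ]
    push_cast
    ring
  · simp

private def Bseq (r m N : ℕ) : ℤ :=
  if m ≤ r then ((N + (r - m)).choose (r - m) : ℤ) else (-1) ^ N * ((m - r - 1).choose N : ℤ)

private lemma Aseq_eq_Bseq (r m N : ℕ) : Aseq r m N = Bseq r m N := by
  induction m generalizing N with
  | zero =>
    rw [Aseq_zero]
    simp [Bseq, Nat.add_comm r N]
  | succ m ih =>
    cases N with
    | zero =>
      rw [Aseq_zero_right]
      unfold Bseq
      split <;> simp
    | succ N =>
      rw [Aseq_succ, ih, ih]
      unfold Bseq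
      rcases lt_trichotomy m r with h | h | h
      · simp only [if_pos (show m + 1 ≤ r by omega), if_pos (show m ≤ r by omega)]
        have h1 : r - m = (r - (m + 1)) + 1 := by omega
        have h2 : N + 1 + (r - m) = (N + (r - m)) + 1 := by omega
        rw [h2, h1, Nat.choose_succ_succ,
          show N + (r - (m + 1) + 1) = N + 1 + (r - (m + 1)) from by omega]
        simp [Nat.succ_eq_add_one]
      · subst h
        rw [if_neg (show ¬ (m + 1 ≤ m) by omega), if_pos (le_refl m)]
        simp [show m + 1 - m - 1 = 0 by omega]
      · simp only [if_neg (show ¬ (m + 1 ≤ r) by omega), if_neg (show ¬ (m ≤ r) by omega)]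
        rw [show m + 1 - r - 1 = (m - r - 1) + 1 from by omega, Nat.choose_succ_succ]
        push_cast
        ring

private lemma key0 (k t : ℕ) :
    ∑ i ∈ Finset.range (t + 2),
      (-1) ^ i * Ccoef i (2 * (k + t) + 2) * ((2 * k + t + 2 - i).choose (2 * k + 1) : ℤ) = 0 := by
  have hsplit : ∑ i ∈ Finset.range (t + 2),
      (-1) ^ i * Ccoef i (2 * (k + t) + 2) * ((2 * k + t + 2 - i).choose (2 * k + 1) : ℤ)
      = (∑ i ∈ Finset.range (t + 2),
          (-1) ^ i * ((2 * (k + t) + 2).choose i : ℤ) * ((2 * k + t + 2 - i).choose (2 * k + 1) : ℤ))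
        - ∑ i ∈ Finset.range (t + 2),
          (-1) ^ i * (if 2 ≤ i then ((2 * (k + t) + 2).choose (i - 2) : ℤ) else 0)
            * ((2 * k + t + 2 - i).choose (2 * k + 1) : ℤ) := by
    rw [← Finset.sum_sub_distrib]
    refine Finset.sum_congr rfl fun i _ => ?_
    unfold Ccoef
    ring
  rw [hsplit]
  have hS1 : ∑ i ∈ Finset.range (t + 2),
      (-1) ^ i * ((2 * (k + t) + 2).choose i : ℤ) * ((2 * k + t + 2 - i).choose (2 * k + 1) : ℤ)
      = Aseq (2 * k + 1) (2 * (k + t) + 2) (t + 1) := by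
    unfold Aseq
    refine Finset.sum_congr rfl fun i _ => ?_
    rw [show 2 * k + 1 + (t + 1) - i = 2 * k + t + 2 - i from by omega]
  rw [hS1, Aseq_eq_Bseq]
  cases t with
  | zero =>
    rw [show (∑ i ∈ Finset.range (0 + 2),
        (-1) ^ i * (if 2 ≤ i then ((2 * (k + 0) + 2).choose (i - 2) : ℤ) else 0)
          * ((2 * k + 0 + 2 - i).choose (2 * k + 1) : ℤ)) = 0 from by
      simp [Finset.sum_range_succ]]
    unfold Bseq
    rw [if_neg (show ¬ (2 * (k + 0) + 2 ≤ 2 * k + 1) by omega)]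
    simp [show 2 * (k + 0) + 2 - (2 * k + 1) - 1 = 0 by omega]
  | succ s =>
    have hS2 : ∑ i ∈ Finset.range (s + 1 + 2),
        (-1) ^ i * (if 2 ≤ i then ((2 * (k + (s + 1)) + 2).choose (i - 2) : ℤ) else 0)
          * ((2 * k + (s + 1) + 2 - i).choose (2 * k + 1) : ℤ)
        = Aseq (2 * k + 1) (2 * (k + (s + 1)) + 2) s := by
      rw [Finset.sum_range_succ' _ (s + 2), Finset.sum_range_succ' _ (s + 1)]
      have e0 : ((-1 : ℤ) ^ 0 * (if 2 ≤ 0 then ((2 * (k + (s + 1)) + 2).choose (0 - 2) : ℤ) else 0)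
          * ((2 * k + (s + 1) + 2 - 0).choose (2 * k + 1) : ℤ)) = 0 := by norm_num
      have e1 : ((-1 : ℤ) ^ (0 + 1) * (if 2 ≤ 0 + 1 then ((2 * (k + (s + 1)) + 2).choose (0 + 1 - 2) : ℤ) else 0)
          * ((2 * k + (s + 1) + 2 - (0 + 1)).choose (2 * k + 1) : ℤ)) = 0 := by norm_num
      rw [e0, e1, add_zero, add_zero]
      unfold Aseq
      refine Finset.sum_congr rfl fun j _ => ?_
      rw [if_pos (show 2 ≤ j + 1 + 1 by omega)]
      rw [show j + 1 + 1 - 2 = j from by omega,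
        show 2 * k + (s + 1) + 2 - (j + 1 + 1) = 2 * k + 1 + s - j from by omega]
      ring
    rw [hS2, Aseq_eq_Bseq]
    unfold Bseq
    rw [if_neg (show ¬ (2 * (k + (s + 1)) + 2 ≤ 2 * k + 1) by omega),
      if_neg (show ¬ (2 * (k + (s + 1)) + 2 ≤ 2 * k + 1) by omega)]
    rw [show 2 * (k + (s + 1)) + 2 - (2 * k + 1) - 1 = 2 * s + 2 from by omega]
    have hsym := Nat.choose_symm (show s + 1 + 1 ≤ 2 * s + 2 by omega)
    rw [show 2 * s + 2 - (s + 1 + 1) = s from by omega] at hsym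
    rw [← hsym]
    rw [pow_succ, pow_succ]
    ring

private lemma key (k t : ℕ) :
    ∑ i ∈ Finset.Icc 1 (t + 1), Ccoef i (2 * (k + t) + 2) *
        ((-1) ^ (t + 1 - i) * ((k + t + 1 - i + k + 1).choose (2 * k + 1) : ℤ))
      = (-1) ^ t * ((2 * k + t + 2).choose (2 * k + 1) : ℤ) := by
  have h0 := key0 k t
  rw [Finset.sum_range_succ' _ (t + 1)] at h0
  have hf0 : ((-1 : ℤ) ^ 0 * Ccoef 0 (2 * (k + t) + 2) * ((2 * k + t + 2 - 0).choose (2 * k + 1) : ℤ))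
      = ((2 * k + t + 2).choose (2 * k + 1) : ℤ) := by
    unfold Ccoef
    norm_num
  rw [hf0] at h0
  have h : ∑ i ∈ Finset.range (t + 1),
      (-1) ^ (i + 1) * Ccoef (i + 1) (2 * (k + t) + 2) * ((2 * k + t + 2 - (i + 1)).choose (2 * k + 1) : ℤ)
      = -((2 * k + t + 2).choose (2 * k + 1) : ℤ) := by linarith [h0]
  rw [← Finset.Ico_add_one_right_eq_Icc, Finset.sum_Ico_eq_sum_range,
    show t + 1 + 1 - 1 = t + 1 from rfl]
  have hstep : ∑ i ∈ Finset.range (t + 1), Ccoef (1 + i) (2 * (k + t) + 2) *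
      ((-1) ^ (t + 1 - (1 + i)) * ((k + t + 1 - (1 + i) + k + 1).choose (2 * k + 1) : ℤ))
      = (-(-1) ^ t) * ∑ i ∈ Finset.range (t + 1),
        (-1) ^ (i + 1) * Ccoef (i + 1) (2 * (k + t) + 2) * ((2 * k + t + 2 - (i + 1)).choose (2 * k + 1) : ℤ) := by
    rw [Finset.mul_sum]
    refine Finset.sum_congr rfl fun i hi => ?_
    rw [Finset.mem_range] at hi
    have hi' : i ≤ t := by omega
    rw [show 1 + i = i + 1 from by omega,
      show t + 1 - (i + 1) = t - i from by omega,
      show k + t + 1 - (i + 1) + k + 1 = 2 * k + t + 2 - (i + 1) from by omega]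
    have h2 : ((-1 : ℤ)) ^ t = (-1) ^ (t - i) * (-1) ^ i := by
      rw [← pow_add]
      congr 1
      omega
    have h3 : ((-1 : ℤ)) ^ i * (-1) ^ i = 1 := by
      rw [← pow_add, Even.neg_one_pow ⟨i, rfl⟩]
    rw [h2, pow_succ]
    linear_combination (-(Ccoef (i + 1) (2 * (k + t) + 2) *
      ((2 * k + t + 2 - (i + 1)).choose (2 * k + 1) : ℤ) * (-1) ^ (t - i))) * h3
  rw [hstep, h]
  ring

/-- Closed formula for the coefficients `Y_{k,n}` of the dual canonical basis element
`L(k,2n+1)` of the split rank-one ι-quantum group: `Y_{k,n} = (-1)^{n-k} binom(n+k+1, 2k+1)`. -/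
theorem Y_coeff_closed_formula (Y : ℕ → ℕ → ℤ)
    (hYdiag : ∀ n, Y n n = 1)
    (hYrec : ∀ k n, k ≤ n →
      Y k (n + 1) = -∑ i ∈ Finset.Icc 1 (n + 1 - k), Ccoef i (2 * n + 2) * Y k (n + 1 - i)) :
    ∀ k n, k ≤ n → Y k n = (-1) ^ (n - k) * ((n + k + 1).choose (2 * k + 1) : ℤ) := by
  intro k n hkn
  obtain ⟨t, rfl⟩ : ∃ t, n = k + t := ⟨n - k, by omega⟩
  clear hkn
  induction t using Nat.strong_induction_on with
  | _ t IH =>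
    cases t with
    | zero =>
      rw [show k + 0 = k from rfl, hYdiag k]
      simp [Nat.sub_self, show k + k + 1 = 2 * k + 1 from by omega, Nat.choose_self]
    | succ t =>
      have hrec := hYrec k (k + t) (Nat.le_add_right _ _)
      rw [show k + (t + 1) = k + t + 1 from rfl, hrec,
        show k + t + 1 - k = t + 1 from by omega]
      have hsum : ∑ i ∈ Finset.Icc 1 (t + 1), Ccoef i (2 * (k + t) + 2) * Y k (k + t + 1 - i)
          = ∑ i ∈ Finset.Icc 1 (t + 1), Ccoef i (2 * (k + t) + 2) *
              ((-1) ^ (t + 1 - i) * ((k + t + 1 - i + k + 1).choose (2 * k + 1) : ℤ)) := by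
        refine Finset.sum_congr rfl fun i hi => ?_
        rw [Finset.mem_Icc] at hi
        have h1 : k + t + 1 - i = k + (t + 1 - i) := by omega
        rw [h1, IH (t + 1 - i) (by omega)]
        rw [show k + (t + 1 - i) - k = t + 1 - i from by omega]
      rw [hsum, key k t,
        show k + t + 1 + k + 1 = 2 * k + t + 2 from by omega, pow_succ]
      ring
end

section
/- For all integers k ≥ 1 and n ≥ 1, ∑_{i=0}^{n} (−1)^i·binom(2k+i, i)·binom(2n+2k−1, n−i) = ∑_{i=0}^{n} (−1)^i·binom(2k+i, i)·binom(2n+2k−1, n−i−2). -/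
open Finset PowerSeries

private lemma coeff_one_add_X_pow_ps (N m : ℕ) :
    (PowerSeries.coeff (R := ℤ) m) ((1 + PowerSeries.X) ^ N) = (N.choose m : ℤ) := by
  rw [← Polynomial.coe_one, ← Polynomial.coe_X, ← Polynomial.coe_add, ← Polynomial.coe_pow,
    Polynomial.coeff_coe, Polynomial.coeff_one_add_X_pow]

private lemma g_mul (a : ℕ) :
    (PowerSeries.mk fun i => (-1 : ℤ) ^ i * ((a + i).choose a : ℤ)) *
      (1 + PowerSeries.X) ^ (a + 1) = 1 := by
  have h := PowerSeries.mk_add_choose_mul_one_sub_pow_eq_one ℤ a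
  have h2 := congrArg (PowerSeries.rescale (-1 : ℤ)) h
  rwa [map_mul, map_pow, map_sub, map_one, PowerSeries.rescale_mk,
    PowerSeries.rescale_neg_one_X, sub_neg_eq_add] at h2

private lemma conv (a N m : ℕ) (h : a + 1 ≤ N) :
    ∑ i ∈ range (m + 1), (-1 : ℤ) ^ i * ((a + i).choose i : ℤ) * (N.choose (m - i) : ℤ)
      = ((N - (a + 1)).choose m : ℤ) := by
  have key : (PowerSeries.mk fun i => (-1 : ℤ) ^ i * ((a + i).choose a : ℤ)) *
      (1 + PowerSeries.X) ^ N = (1 + PowerSeries.X) ^ (N - (a + 1)) := by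
    have hN : N = (a + 1) + (N - (a + 1)) := by omega
    rw [hN, pow_add, ← mul_assoc, g_mul, one_mul]
    congr 1
    omega
  have hc := congrArg (PowerSeries.coeff (R := ℤ) m) key
  rw [PowerSeries.coeff_mul, coeff_one_add_X_pow_ps] at hc
  rw [← hc, Finset.Nat.sum_antidiagonal_eq_sum_range_succ_mk]
  refine Finset.sum_congr rfl fun i hi => ?_
  rw [PowerSeries.coeff_mk, coeff_one_add_X_pow_ps, Nat.choose_symm_add]

/-- The binomial identity underlying the closed formula for the coefficients of the dual
canonical basis of `Ũ^ι_v(sl₂)`: for `k ≥ 1`, `n ≥ 1`,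
`∑_{i=0}^{n} (-1)^i binom(2k+i, i) binom(2n+2k-1, n-i)
  = ∑_{i=0}^{n} (-1)^i binom(2k+i, i) binom(2n+2k-1, n-i-2)`,
with the convention that `binom(m, j) = 0` for `j < 0`. -/
theorem alternating_binomial_identity (k n : ℕ) (hk : 1 ≤ k) (hn : 1 ≤ n) :
    ∑ i ∈ Finset.range (n + 1),
        (-1 : ℤ) ^ i * ((2 * k + i).choose i : ℤ) * ((2 * n + 2 * k - 1).choose (n - i) : ℤ) =
      ∑ i ∈ Finset.range (n + 1),
        (-1 : ℤ) ^ i * ((2 * k + i).choose i : ℤ) *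
          (if i + 2 ≤ n then ((2 * n + 2 * k - 1).choose (n - i - 2) : ℤ) else 0) := by
  set N := 2 * n + 2 * k - 1 with hN
  have hL : ∑ i ∈ Finset.range (n + 1),
      (-1 : ℤ) ^ i * ((2 * k + i).choose i : ℤ) * (N.choose (n - i) : ℤ)
      = ((N - (2 * k + 1)).choose n : ℤ) := conv (2 * k) N n (by omega)
  have hfilter : ∑ i ∈ Finset.range (n + 1),
      (-1 : ℤ) ^ i * ((2 * k + i).choose i : ℤ) *
        (if i + 2 ≤ n then (N.choose (n - i - 2) : ℤ) else 0)
      = ∑ i ∈ Finset.range (n - 1),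
        (-1 : ℤ) ^ i * ((2 * k + i).choose i : ℤ) * (N.choose (n - i - 2) : ℤ) := by
    have hset : (Finset.range (n + 1)).filter (fun i => i + 2 ≤ n) = Finset.range (n - 1) := by
      ext i
      simp only [Finset.mem_filter, Finset.mem_range]
      omega
    simp only [mul_ite, mul_zero, ← Finset.sum_filter, hset]
  rw [hL, hfilter]
  rcases Nat.lt_or_ge n 2 with h2 | h2
  · interval_cases n
    rw [show (1 : ℕ) - 1 = 0 from rfl, Finset.range_zero, Finset.sum_empty,
      show N - (2 * k + 1) = 0 from by omega]
    norm_num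
  · have hn1 : n - 1 = (n - 2) + 1 := by omega
    rw [hn1]
    have : ∑ i ∈ Finset.range ((n - 2) + 1),
        (-1 : ℤ) ^ i * ((2 * k + i).choose i : ℤ) * (N.choose (n - i - 2) : ℤ)
        = ∑ i ∈ Finset.range ((n - 2) + 1),
          (-1 : ℤ) ^ i * ((2 * k + i).choose i : ℤ) * (N.choose ((n - 2) - i) : ℤ) := by
      refine Finset.sum_congr rfl fun i _ => ?_
      rw [show n - i - 2 = (n - 2) - i from by omega]
    rw [this, conv (2 * k) N (n - 2) (by omega)]
    have hsub : N - (2 * k + 1) = 2 * n - 2 := by omega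
    rw [hsub]
    have : 2 * n - 2 - n = n - 2 := by omega
    rw [← this, Nat.choose_symm (by omega)]
end

section
/- For all integers k ≥ 1 and n ≥ 1, ∑_{i=0}^{n} (−1)^i·binom(2k+i, i)·binom(2n+2k−1, n−i) = binom(2n−2, n). -/
lemma ring_choose_negSucc (j i : ℕ) :
    Ring.choose (Int.negSucc j : ℤ) i = (-1 : ℤ) ^ i * ((j + i).choose i : ℤ) := by
  rw [Ring.choose]
  have h : (Int.negSucc j : ℤ) - i + 1 = -((j + i : ℕ) : ℤ) := by
    rw [Int.negSucc_eq]; push_cast; ring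
  rw [h]
  rcases Nat.eq_zero_or_pos (j + i) with h0 | hpos
  · obtain ⟨hj, hi⟩ := Nat.add_eq_zero.mp h0
    subst hj; subst hi
    simp [Ring.multichoose_zero_right]
  · have h2 : -((j + i : ℕ) : ℤ) = Int.negSucc (j + i - 1) := by
      rw [Int.negSucc_eq]
      have : (j + i - 1 : ℕ) + 1 = j + i := Nat.succ_pred_eq_of_pos hpos
      rw [← this]; push_cast; ring
    rw [h2]
    show Int.multichoose (Int.negSucc (j + i - 1)) i = _
    show (-1 : ℤ) ^ i * ((j + i - 1 + 1).choose i : ℤ) = _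
    rw [Nat.sub_add_cancel hpos]

/-- For `k ≥ 1`, `n ≥ 1`,
`∑_{i=0}^{n} (-1)^i binom(2k+i, i) binom(2n+2k-1, n-i) = binom(2n-2, n)`,
with the convention that `binom(m, j) = 0` for `j < 0`. -/
theorem alternating_binomial_sum_eval (k n : ℕ) (hk : 1 ≤ k) (hn : 1 ≤ n) :
    ∑ i ∈ Finset.range (n + 1),
        (-1 : ℤ) ^ i * ((2 * k + i).choose i : ℤ) * ((2 * n + 2 * k - 1).choose (n - i) : ℤ) =
      ((2 * n - 2).choose n : ℤ) := by
  have key := Ring.add_choose_eq (R := ℤ) (r := Int.negSucc (2 * k))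
    (s := ((2 * n + 2 * k - 1 : ℕ) : ℤ)) n (Commute.all _ _)
  rw [Finset.Nat.sum_antidiagonal_eq_sum_range_succ_mk] at key
  have hsum : (Int.negSucc (2 * k) : ℤ) + ((2 * n + 2 * k - 1 : ℕ) : ℤ)
      = ((2 * n - 2 : ℕ) : ℤ) := by
    rw [Int.negSucc_eq]
    have h1 : (2 * n + 2 * k - 1 : ℕ) + 1 = 2 * n + 2 * k := by omega
    have h2 : (2 * n - 2 : ℕ) + (2 * k + 1) + 1 = 2 * n + 2 * k := by omega
    have := congrArg (fun m : ℕ => (m : ℤ)) (h1.trans h2.symm)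
    push_cast at this ⊢
    linarith
  rw [hsum, Ring.choose_natCast] at key
  rw [key]
  refine Finset.sum_congr rfl fun i hi => ?_
  rw [ring_choose_negSucc, Ring.choose_natCast, mul_assoc]
end

section
/- For all integers k ≥ 1 and n ≥ 1, ∑_{i=0}^{n} (−1)^i·binom(2k+i, i)·binom(2n+2k−1, n−i−2) = binom(2n−2, n−2). -/
open Polynomial in
lemma neg_choose_eq (m i : ℕ) :
    Ring.choose (-((m : ℤ) + 1)) i = (-1) ^ i * ((m + i).choose i : ℤ) := by
  refine nsmul_right_injective (Nat.factorial_ne_zero i) ?_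
  simp only
  rw [← Ring.descPochhammer_eq_factorial_smul_choose]
  have h := ascPochhammer_smeval_neg_eq_descPochhammer (-((m : ℤ) + 1)) i
  rw [neg_neg] at h
  have hpow : ((-1 : ℤ) ^ i) * ((-1 : ℤ) ^ i) = 1 := by
    rw [← pow_add]; exact Even.neg_one_pow ⟨i, rfl⟩
  have h2 : (descPochhammer ℤ i).smeval (-((m : ℤ) + 1)) =
      (-1) ^ i * (ascPochhammer ℕ i).smeval ((m : ℤ) + 1) := by
    rw [h, Units.smul_def, Int.coe_negOnePow_natCast, smul_eq_mul, ← mul_assoc, hpow, one_mul]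
  rw [h2]
  have h3 : (ascPochhammer ℕ i).smeval ((m : ℤ) + 1) = ((m + i).choose i : ℤ) * i.factorial := by
    have : ((m : ℤ) + 1) = ((m + 1 : ℕ) : ℤ) := by push_cast; ring
    rw [this, ascPochhammer_smeval_eq_eval, ← ascPochhammer_eval_cast,
      ascPochhammer_nat_eq_descFactorial]
    have : (m + 1 + i - 1) = m + i := by omega
    rw [this, Nat.descFactorial_eq_factorial_mul_choose]
    push_cast; ring
  rw [h3, nsmul_eq_mul]
  ring

/-- For `k ≥ 1`, `n ≥ 1`,
`∑_{i=0}^{n} (-1)^i binom(2k+i, i) binom(2n+2k-1, n-i-2) = binom(2n-2, n-2)`,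
with the convention that `binom(m, j) = 0` for `j < 0`. -/
theorem alternating_binomial_sum_eval' (k n : ℕ) (hk : 1 ≤ k) (hn : 1 ≤ n) :
    ∑ i ∈ Finset.range (n + 1),
        (-1 : ℤ) ^ i * ((2 * k + i).choose i : ℤ) *
          (if i + 2 ≤ n then ((2 * n + 2 * k - 1).choose (n - i - 2) : ℤ) else 0) =
      (if 2 ≤ n then ((2 * n - 2).choose (n - 2) : ℤ) else 0) := by
  by_cases h2 : 2 ≤ n
  case neg =>
    interval_cases n
    · simp
  case pos =>
    rw [if_pos h2]
    -- rewrite sum to sum over range (n-1)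
    have key : ∀ i ∈ Finset.range (n - 1),
        (-1 : ℤ) ^ i * ((2 * k + i).choose i : ℤ) * ((2 * n + 2 * k - 1).choose (n - 2 - i) : ℤ)
          = Ring.choose (-((2 * k : ℤ) + 1)) i *
            Ring.choose (((2 * n + 2 * k - 1 : ℕ) : ℤ)) (n - 2 - i) := by
      intro i _
      have h := neg_choose_eq (2 * k) i
      push_cast at h ⊢
      rw [h, Ring.choose_natCast]
    have hsum : ∑ i ∈ Finset.range (n + 1),
        (-1 : ℤ) ^ i * ((2 * k + i).choose i : ℤ) *
          (if i + 2 ≤ n then ((2 * n + 2 * k - 1).choose (n - i - 2) : ℤ) else 0)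
        = ∑ i ∈ Finset.range (n - 1),
            (-1 : ℤ) ^ i * ((2 * k + i).choose i : ℤ) *
              ((2 * n + 2 * k - 1).choose (n - 2 - i) : ℤ) := by
      rw [← Finset.sum_subset (Finset.range_subset_range.mpr (by omega : n - 1 ≤ n + 1))]
      · apply Finset.sum_congr rfl
        intro i hi
        rw [Finset.mem_range] at hi
        rw [if_pos (by omega), show n - i - 2 = n - 2 - i from by omega]
      · intro i _ hi
        rw [Finset.mem_range, not_lt] at hi
        rw [if_neg (by omega), mul_zero]
    rw [hsum, Finset.sum_congr rfl key]
    have hvdm := Ring.add_choose_eq (r := -((2 * k : ℤ) + 1)) (s := ((2 * n + 2 * k - 1 : ℕ) : ℤ))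
      (n - 2) (Commute.all _ _)
    rw [Finset.Nat.sum_antidiagonal_eq_sum_range_succ
      (fun a b => Ring.choose (-((2 * k : ℤ) + 1)) a *
        Ring.choose (((2 * n + 2 * k - 1 : ℕ) : ℤ)) b)] at hvdm
    have hcast : ((2 * n + 2 * k - 1 : ℕ) : ℤ) = 2 * n + 2 * k - 1 := by
      push_cast [Nat.cast_sub (by omega : 1 ≤ 2 * n + 2 * k)]; ring
    have hadd : -((2 * k : ℤ) + 1) + ((2 * n + 2 * k - 1 : ℕ) : ℤ) = ((2 * n - 2 : ℕ) : ℤ) := by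
      rw [hcast]
      push_cast [Nat.cast_sub (by omega : 2 ≤ 2 * n)]
      ring
    rw [hadd, Ring.choose_natCast] at hvdm
    rw [show (n - 2).succ = n - 1 from by omega] at hvdm
    exact hvdm.symm
end

section
/- For all integers a ≥ 1 and b ≥ 0, one has in A: B^a·K^b = ∑_{i=0}^{⌊a/2⌋} (binom(a−1, i) − binom(a−1, i−2))·L(i+b, a+2b), where binom(a−1, i−2) is interpreted as 0 when i < 2. -/
/-- The closed formula for the dual canonical basis element `L(k,n)` of the split rank-one
ι-quantum group `Ũ^ι_v(sl₂) ≅ ℚ(v^{1/2})[B, K^{±1}]`, expressed in the generators `B`, `K`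
of a commutative ring:
`L(k,n) = ∑_{j=k}^{⌊n/2⌋} (-1)^{j-k} binom(n-k-j, n-2j) B^{n-2j} K^j`. -/
def Lel {A : Type*} [CommRing A] (B K : A) (k n : ℕ) : A :=
  ∑ j ∈ Finset.Icc k (n / 2),
    ((-1 : ℤ) ^ (j - k) * ((n - k - j).choose (n - 2 * j) : ℤ)) • (B ^ (n - 2 * j) * K ^ j)

lemma Lel_eq_zero {A : Type*} [CommRing A] (B K : A) {k n : ℕ} (h : n / 2 < k) :
    Lel B K k n = 0 := by
  unfold Lel
  rw [Finset.Icc_eq_empty (by omega), Finset.sum_empty]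

lemma coeff_key (k n j : ℕ) (hk : 2 * k ≤ n) (hkj : k ≤ j) (hj : 2 * j ≤ n + 1) :
    (if 2 * j ≤ n then ((-1 : ℤ) ^ (j - k) * ((n - k - j).choose (n - 2 * j) : ℤ) : ℤ) else 0)
      = (-1 : ℤ) ^ (j - k) * ((n + 1 - k - j).choose (n + 1 - 2 * j) : ℤ)
        + (-1 : ℤ) ^ (j - (k + 1)) * ((n + 1 - (k + 1) - j).choose (n + 1 - 2 * j) : ℤ) := by
  rcases Nat.eq_or_lt_of_le hkj with rfl | hlt
  · have h1 : 2 * k ≤ n := hk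
    rw [if_pos h1]
    have e1 : k - k = 0 := by omega
    have e2 : k - (k + 1) = 0 := by omega
    have e3 : n - k - k = n - 2 * k := by omega
    have e4 : n + 1 - k - k = n + 1 - 2 * k := by omega
    have e5 : n + 1 - (k + 1) - k = n - 2 * k := by omega
    have e6 : n + 1 - 2 * k = (n - 2 * k) + 1 := by omega
    rw [e1, e2, e3, e4, e5, e6]
    have e7 : (n - 2 * k).choose (n - 2 * k + 1) = 0 := Nat.choose_eq_zero_of_lt (by omega)
    rw [e7]
    simp [Nat.choose_self]
  · have hsign : (-1 : ℤ) ^ (j - (k + 1)) = -(-1 : ℤ) ^ (j - k) := by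
      have : j - k = (j - (k + 1)) + 1 := by omega
      rw [this, pow_succ]; ring
    rw [hsign]
    rcases Nat.lt_or_ge (2 * j) (n + 1) with h2 | h2
    · have hn : 2 * j ≤ n := by omega
      rw [if_pos hn]
      have e1 : n + 1 - k - j = (n - k - j) + 1 := by omega
      have e2 : n + 1 - 2 * j = (n - 2 * j) + 1 := by omega
      have e3 : n + 1 - (k + 1) - j = n - k - j := by omega
      rw [e1, e2, e3, Nat.choose_succ_succ]
      push_cast
      ring
    · have hn : ¬ 2 * j ≤ n := by omega
      rw [if_neg hn]
      have e2 : n + 1 - 2 * j = 0 := by omega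
      rw [e2]
      simp

lemma B_mul_Lel {A : Type*} [CommRing A] (B K : A) (k n : ℕ) (h : 2 * k ≤ n) :
    B * Lel B K k n = Lel B K k (n + 1) + Lel B K (k + 1) (n + 1) := by
  unfold Lel
  have hsub1 : Finset.Icc (k + 1) ((n + 1) / 2) ⊆ Finset.Icc k ((n + 1) / 2) :=
    Finset.Icc_subset_Icc_left (by omega)
  rw [Finset.sum_subset hsub1 (by
    intro x hx hnx
    simp only [Finset.mem_Icc] at hx hnx
    have hx0 : x = k := by omega
    have : (n + 1 - (k + 1) - x).choose (n + 1 - 2 * x) = 0 :=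
      Nat.choose_eq_zero_of_lt (by omega)
    rw [this]
    simp)]
  rw [Finset.mul_sum]
  have step1 : ∀ j ∈ Finset.Icc k (n / 2),
      B * (((-1 : ℤ) ^ (j - k) * ((n - k - j).choose (n - 2 * j) : ℤ)) • (B ^ (n - 2 * j) * K ^ j))
        = (if 2 * j ≤ n then ((-1 : ℤ) ^ (j - k) * ((n - k - j).choose (n - 2 * j) : ℤ)) else 0)
            • (B ^ (n + 1 - 2 * j) * K ^ j) := by
    intro j hj
    simp only [Finset.mem_Icc] at hj
    have h2j : 2 * j ≤ n := by omega
    rw [if_pos h2j]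
    rw [mul_smul_comm]
    congr 1
    have : n + 1 - 2 * j = (n - 2 * j) + 1 := by omega
    rw [this, pow_succ]
    ring
  rw [Finset.sum_congr rfl step1]
  have hsub2 : Finset.Icc k (n / 2) ⊆ Finset.Icc k ((n + 1) / 2) :=
    Finset.Icc_subset_Icc_right (by omega)
  rw [Finset.sum_subset hsub2 (by
    intro x hx hnx
    simp only [Finset.mem_Icc] at hx hnx
    have : ¬ 2 * x ≤ n := by omega
    rw [if_neg this, zero_smul])]
  rw [← Finset.sum_add_distrib]
  apply Finset.sum_congr rfl
  intro j hj
  simp only [Finset.mem_Icc] at hj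
  rw [coeff_key k n j h hj.1 (by omega), add_smul]

lemma pascal_d (a i : ℕ) :
    ((a + 1).choose i : ℤ) - (if 2 ≤ i then (((a + 1)).choose (i - 2) : ℤ) else 0)
      = ((a.choose i : ℤ) - (if 2 ≤ i then (a.choose (i - 2) : ℤ) else 0))
        + (if 1 ≤ i then
            ((a.choose (i - 1) : ℤ) - (if 2 ≤ i - 1 then (a.choose (i - 1 - 2) : ℤ) else 0))
          else 0) := by
  match i with
  | 0 => simp
  | 1 => simp [Nat.choose_succ_succ]; ring
  | 2 => simp [Nat.choose_succ_succ]; ring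
  | (m + 3) =>
    have e1 : m + 3 - 2 = m + 1 := by omega
    have e2 : m + 3 - 1 = m + 2 := by omega
    have e3 : m + 2 - 2 = m := by omega
    rw [e1, e2, if_pos (by omega : 2 ≤ m + 3), if_pos (by omega : 1 ≤ m + 3),
      if_pos (by omega : 2 ≤ m + 2), e3]
    rw [Nat.choose_succ_succ a (m + 2), Nat.choose_succ_succ a m]
    push_cast
    ring

/-- For `a ≥ 1`, `b ≥ 0`:
`B^a K^b = ∑_{i=0}^{⌊a/2⌋} (binom(a-1,i) - binom(a-1,i-2)) L(i+b, a+2b)`,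
with `binom(a-1, i-2)` interpreted as `0` when `i < 2`. -/
theorem monomial_in_terms_of_dual_canonical_basis {A : Type*} [CommRing A] (B K : A)
    (a b : ℕ) (ha : 1 ≤ a) :
    B ^ a * K ^ b = ∑ i ∈ Finset.range (a / 2 + 1),
      (((a - 1).choose i : ℤ) - (if 2 ≤ i then ((a - 1).choose (i - 2) : ℤ) else 0)) •
        Lel B K (i + b) (a + 2 * b) := by
  induction a, ha using Nat.le_induction with
  | base =>
    have h2 : (1 : ℕ) / 2 + 1 = 1 := rfl
    rw [h2, Finset.sum_range_one]
    simp only [Nat.sub_self, Nat.choose_zero_right, Nat.cast_one]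
    rw [if_neg (by omega), sub_zero, zero_add]
    unfold Lel
    have h3 : (1 + 2 * b) / 2 = b := by omega
    rw [h3, Finset.Icc_self, Finset.sum_singleton]
    have e1 : 1 + 2 * b - 2 * b = 1 := by omega
    have e2 : 1 + 2 * b - b - b = 1 := by omega
    rw [e1, e2]
    simp
  | succ a ha ih =>
    obtain ⟨c, rfl⟩ : ∃ c, a = c + 1 := ⟨a - 1, by omega⟩
    simp only [Nat.add_sub_cancel] at ih ⊢
    set N : ℕ := c + 1 + 1 + 2 * b with hN
    set M : ℕ := (c + 1) / 2 with hM
    set d : ℕ → ℤ := fun i =>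
      ((c.choose i : ℤ) - (if 2 ≤ i then (c.choose (i - 2) : ℤ) else 0)) with hd
    set e : ℕ → ℤ := fun i =>
      (((c + 1).choose i : ℤ) - (if 2 ≤ i then ((c + 1).choose (i - 2) : ℤ) else 0)) with he
    have step : ∀ i ∈ Finset.range (M + 1),
        B * Lel B K (i + b) (c + 1 + 2 * b)
          = Lel B K (i + b) N + Lel B K (i + 1 + b) N := by
      intro i hi
      simp only [Finset.mem_range] at hi
      have h1 := B_mul_Lel B K (i + b) (c + 1 + 2 * b) (by omega)
      rw [show c + 1 + 2 * b + 1 = N from by omega,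
        show i + b + 1 = i + 1 + b from by omega] at h1
      exact h1
    have key : B ^ (c + 1 + 1) * K ^ b
        = (∑ i ∈ Finset.range (M + 1), d i • Lel B K (i + b) N)
          + ∑ i ∈ Finset.range (M + 1), d i • Lel B K (i + 1 + b) N := by
      calc B ^ (c + 1 + 1) * K ^ b = B * (B ^ (c + 1) * K ^ b) := by ring
        _ = B * ∑ i ∈ Finset.range (M + 1), d i • Lel B K (i + b) (c + 1 + 2 * b) := by
              rw [ih]
        _ = ∑ i ∈ Finset.range (M + 1), d i • (B * Lel B K (i + b) (c + 1 + 2 * b)) := by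
              rw [Finset.mul_sum]
              exact Finset.sum_congr rfl fun i _ => mul_smul_comm _ _ _
        _ = ∑ i ∈ Finset.range (M + 1),
              d i • (Lel B K (i + b) N + Lel B K (i + 1 + b) N) :=
              Finset.sum_congr rfl fun i hi => by rw [step i hi]
        _ = _ := by
              simp only [smul_add]
              rw [Finset.sum_add_distrib]
    rw [key]
    have hRHS : ∑ i ∈ Finset.range ((c + 1 + 1) / 2 + 1), e i • Lel B K (i + b) N
        = ∑ i ∈ Finset.range (M + 2), e i • Lel B K (i + b) N := by
      rcases Nat.even_or_odd c with ⟨s, hs⟩ | ⟨s, hs⟩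
      · -- c even : (c+2)/2 + 1 = M + 2
        rw [show (c + 1 + 1) / 2 + 1 = M + 2 from by omega]
      · -- c odd : (c+2)/2 + 1 = M + 1, extra term vanishes
        rw [Finset.sum_range_succ (n := M + 1),
          show (c + 1 + 1) / 2 + 1 = M + 1 from by omega,
          Lel_eq_zero B K (by omega : N / 2 < M + 1 + b), smul_zero, add_zero]
    rw [hRHS]
    have hsplit : ∀ i, e i = d i + (if 1 ≤ i then
        ((c.choose (i - 1) : ℤ) - (if 2 ≤ i - 1 then (c.choose (i - 1 - 2) : ℤ) else 0))
        else 0) := fun i => pascal_d c i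
    calc (∑ i ∈ Finset.range (M + 1), d i • Lel B K (i + b) N)
          + ∑ i ∈ Finset.range (M + 1), d i • Lel B K (i + 1 + b) N
        = (∑ i ∈ Finset.range (M + 2), d i • Lel B K (i + b) N)
          + ∑ i ∈ Finset.range (M + 2), (if 1 ≤ i then
              ((c.choose (i - 1) : ℤ) - (if 2 ≤ i - 1 then (c.choose (i - 1 - 2) : ℤ) else 0))
              else 0) • Lel B K (i + b) N := by
          congr 1
          · -- extend first sum by a vanishing term
            rw [Finset.sum_range_succ (n := M + 1)]
            have hzero : d (M + 1) • Lel B K (M + 1 + b) N = 0 := by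
              rcases Nat.even_or_odd c with ⟨s, hs⟩ | ⟨s, hs⟩
              · -- c even : coefficient vanishes
                have hdz : d (M + 1) = 0 := by
                  rcases Nat.eq_zero_or_pos s with rfl | hs1
                  · simp [hd, hM, hs, Nat.choose_eq_zero_of_lt]
                  · have hMs : M = s := by omega
                    have h1 : c.choose (M + 1) = c.choose (M - 1) := by
                      have hle : M + 1 ≤ c := by omega
                      have := Nat.choose_symm hle
                      rw [show c - (M + 1) = M - 1 from by omega] at this
                      exact this.symm
                    simp only [hd]
                    rw [if_pos (by omega), h1, show M + 1 - 2 = M - 1 from by omega, sub_self]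
                rw [hdz, zero_smul]
              · -- c odd : Lel vanishes
                rw [Lel_eq_zero B K (by omega : N / 2 < M + 1 + b), smul_zero]
            rw [hzero, add_zero]
          · -- shift index in second sum
            rw [Finset.sum_range_succ' _ (M + 1)]
            rw [if_neg (by omega : ¬ (1 : ℕ) ≤ 0), zero_smul, add_zero]
            apply Finset.sum_congr rfl
            intro i _
            rw [if_pos (by omega : 1 ≤ i + 1)]
            simp only [hd, Nat.add_sub_cancel]
      _ = ∑ i ∈ Finset.range (M + 2), e i • Lel B K (i + b) N := by
          rw [← Finset.sum_add_distrib]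
          exact Finset.sum_congr rfl fun i _ => by rw [hsplit i, add_smul]
end

section
/- For all integers 0 ≤ v₁ ≤ ⌊w₁/2⌋ and 0 ≤ v₂ ≤ ⌊w₂/2⌋, one has in A: L(v₁,w₁)·L(v₂,w₂) = ∑_{v=v₁+v₂}^{m} L(v, w₁+w₂), where m = min{w₁ − v₁ + v₂, w₂ − v₂ + v₁, ⌊(w₁+w₂)/2⌋}. -/
section aux
open Finset
variable {A : Type*} [CommRing A] (B K : A)

/-- Chebyshev-like sequence. -/
def Uc (B K : A) : ℕ → A
  | 0 => 1
  | 1 => B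
  | n+2 => B * Uc B K (n+1) - K * Uc B K n

lemma Uc_add_two (n : ℕ) : Uc B K (n+2) = B * Uc B K (n+1) - K * Uc B K n := rfl

lemma B_mul_Uc (n : ℕ) : B * Uc B K (n+1) = Uc B K (n+2) + K * Uc B K n := by
  rw [Uc_add_two]; ring

/-- single term of the closed formula (k = 0 shape). -/
def Tm (B K : A) (n j : ℕ) : A :=
  ((-1 : ℤ) ^ j * ((n - j).choose (n - 2 * j) : ℤ)) • (B ^ (n - 2 * j) * K ^ j)

lemma Tm_zero (n : ℕ) : Tm B K n 0 = B ^ n := by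
  simp [Tm]

lemma Tm_step (i d : ℕ) :
    Tm B K (2*i+1+d+2) (i+1)
      = B * Tm B K (2*i+1+d+1) (i+1) - K * Tm B K (2*i+1+d) i := by
  have e1 : 2*i+1+d+2 - (i+1) = (i+d+1)+1 := by omega
  have e2 : 2*i+1+d+2 - 2*(i+1) = d+1 := by omega
  have e3 : 2*i+1+d+1 - (i+1) = i+d+1 := by omega
  have e4 : 2*i+1+d+1 - 2*(i+1) = d := by omega
  have e5 : 2*i+1+d - i = i+d+1 := by omega
  have e6 : 2*i+1+d - 2*i = d+1 := by omega
  simp only [Tm, e1, e2, e3, e4, e5, e6, Nat.choose_succ_succ', zsmul_eq_mul]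
  push_cast
  ring

lemma Tm_top (m : ℕ) : Tm B K (2*m+2) (m+1) = -(K * Tm B K (2*m) m) := by
  have e1 : 2*m+2 - (m+1) = m+1 := by omega
  have e2 : 2*m+2 - 2*(m+1) = 0 := by omega
  have e3 : 2*m - m = m := by omega
  have e4 : 2*m - 2*m = 0 := by omega
  simp only [Tm, e1, e2, e3, e4, Nat.choose_self, Nat.choose_zero_right, zsmul_eq_mul]
  push_cast
  ring

lemma Lel_zero (n : ℕ) : Lel B K 0 n = ∑ j ∈ range (n/2+1), Tm B K n j := by
  rw [Lel, ← Finset.Ico_add_one_right_eq_Icc, Finset.sum_Ico_eq_sum_range]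
  simp [Tm]

lemma Lel_zero_rec (n : ℕ) :
    Lel B K 0 (n+2) = B * Lel B K 0 (n+1) - K * Lel B K 0 n := by
  obtain ⟨m, rfl | rfl⟩ := Nat.even_or_odd' n
  · -- n = 2m
    have d1 : (2*m+2)/2 + 1 = m+2 := by omega
    have d2 : (2*m+1)/2 + 1 = m+1 := by omega
    have d3 : (2*m)/2 + 1 = m+1 := by omega
    rw [Lel_zero, Lel_zero, Lel_zero, d1, d2, d3, Finset.mul_sum, Finset.mul_sum,
      Finset.sum_range_succ' (fun j => Tm B K (2*m+2) j) (m+1),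
      Finset.sum_range_succ (fun j => Tm B K (2*m+2) (j+1)) m,
      Finset.sum_range_succ' (fun j => B * Tm B K (2*m+1) j) m,
      Finset.sum_range_succ (fun j => K * Tm B K (2*m) j) m]
    have key : ∀ i ∈ range m, Tm B K (2*m+2) (i+1)
        = B * Tm B K (2*m+1) (i+1) - K * Tm B K (2*m) i := by
      intro i hi
      rw [Finset.mem_range] at hi
      have h1 : 2*m+2 = 2*i+1+(2*(m-i)-1)+2 := by omega
      have h2 : 2*m+1 = 2*i+1+(2*(m-i)-1)+1 := by omega
      have h3 : 2*m = 2*i+1+(2*(m-i)-1) := by omega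
      rw [h1, h2, h3, Tm_step]
    rw [Finset.sum_congr rfl key, Finset.sum_sub_distrib, Tm_top, Tm_zero, Tm_zero]
    ring_nf
  · -- n = 2m+1
    have d1 : (2*m+3)/2 + 1 = m+2 := by omega
    have d2 : (2*m+2)/2 + 1 = m+2 := by omega
    have d3 : (2*m+1)/2 + 1 = m+1 := by omega
    rw [Lel_zero, Lel_zero, Lel_zero, d1, d2, d3, Finset.mul_sum, Finset.mul_sum,
      Finset.sum_range_succ' (fun j => Tm B K (2*m+3) j) (m+1),
      Finset.sum_range_succ' (fun j => B * Tm B K (2*m+2) j) (m+1)]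
    have key : ∀ i ∈ range (m+1), Tm B K (2*m+3) (i+1)
        = B * Tm B K (2*m+2) (i+1) - K * Tm B K (2*m+1) i := by
      intro i hi
      rw [Finset.mem_range] at hi
      have h1 : 2*m+3 = 2*i+1+(2*(m-i))+2 := by omega
      have h2 : 2*m+2 = 2*i+1+(2*(m-i))+1 := by omega
      have h3 : 2*m+1 = 2*i+1+(2*(m-i)) := by omega
      rw [h1, h2, h3, Tm_step]
    rw [Finset.sum_congr rfl key, Finset.sum_sub_distrib, Tm_zero, Tm_zero]
    ring_nf

lemma Lel_zero_eq_Uc (n : ℕ) : Lel B K 0 n = Uc B K n := by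
  induction n using Nat.twoStepInduction with
  | zero => simp [Lel, Uc, Tm]
  | one => simp [Lel, Uc, Tm]
  | more n ih1 ih2 => rw [Lel_zero_rec, ih1, ih2, Uc_add_two]

lemma Lel_eq_Uc (k n : ℕ) (h : k ≤ n / 2) :
    Lel B K k n = K ^ k * Uc B K (n - 2 * k) := by
  have h2 : 2 * k ≤ n := by omega
  rw [← Lel_zero_eq_Uc, Lel, Lel, ← Finset.Ico_add_one_right_eq_Icc, ← Finset.Ico_add_one_right_eq_Icc,
    Finset.sum_Ico_eq_sum_range, Finset.sum_Ico_eq_sum_range, Finset.mul_sum]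
  have hr : (n - 2*k)/2 + 1 - 0 = n/2 + 1 - k := by omega
  rw [hr]
  refine Finset.sum_congr rfl fun i hi => ?_
  rw [Finset.mem_range] at hi
  have e1 : k + i - k = i := by omega
  have e2 : n - k - (k + i) = n - 2*k - 0 - (0 + i) := by omega
  have e3 : n - 2 * (k + i) = n - 2*k - 2 * (0 + i) := by omega
  rw [e1, e2, e3, zero_add, zsmul_eq_mul, zsmul_eq_mul]
  rw [show K ^ (k + i) = K ^ k * K ^ i from pow_add K k i]
  simp only [Nat.sub_zero]
  ring

lemma Uc_mul_le (a : ℕ) : ∀ b, a ≤ b →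
    Uc B K a * Uc B K b = ∑ i ∈ range (a+1), K ^ i * Uc B K (a + b - 2*i) := by
  induction a using Nat.twoStepInduction with
  | zero => intro b _; simp [Uc]
  | one =>
    intro b hb
    cases b with
    | zero => omega
    | succ c =>
      show Uc B K 1 * Uc B K (c+1) = _
      rw [show Uc B K 1 = B from rfl, B_mul_Uc,
        Finset.sum_range_succ, Finset.sum_range_succ, Finset.sum_range_zero]
      have e1 : 1 + (c+1) - 2*0 = c + 2 := by omega
      have e2 : 1 + (c+1) - 2*1 = c := by omega
      rw [e1, e2]
      ring
  | more a ih1 ih2 =>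
    intro b hb
    rw [Uc_add_two, sub_mul, mul_assoc, mul_assoc,
      ih2 b (by omega), ih1 b (by omega), Finset.mul_sum, Finset.mul_sum]
    have key : ∀ i ∈ range (a+2),
        B * (K ^ i * Uc B K (a+1+b-2*i))
          = K ^ i * Uc B K (a+2+b-2*i) + K ^ (i+1) * Uc B K (a+b-2*i) := by
      intro i hi
      rw [Finset.mem_range] at hi
      have e0 : a+1+b-2*i = (a+b-2*i) + 1 := by omega
      have e1 : a+2+b-2*i = (a+b-2*i) + 2 := by omega
      rw [e0, e1, mul_left_comm, B_mul_Uc, pow_succ]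
      ring
    rw [Finset.sum_congr rfl key, Finset.sum_add_distrib]
    rw [Finset.sum_range_succ (fun i => K ^ (i+1) * Uc B K (a+b-2*i)) (a+1),
      Finset.sum_range_succ (fun i => K ^ i * Uc B K (a+2+b-2*i)) (a+2)]
    have eK : ∀ i ∈ range (a+1), K ^ (i+1) * Uc B K (a+b-2*i) = K * (K ^ i * Uc B K (a+b-2*i)) := by
      intro i _; rw [pow_succ]; ring
    rw [Finset.sum_congr rfl eK, ← Finset.mul_sum]
    have etop : a+2+b-2*(a+2) = a+b-2*(a+1) := by omega
    rw [etop]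
    ring

lemma Uc_mul (a b : ℕ) :
    Uc B K a * Uc B K b = ∑ i ∈ range (min a b + 1), K ^ i * Uc B K (a + b - 2*i) := by
  rcases le_total a b with h | h
  · rw [Nat.min_eq_left h, Uc_mul_le B K a b h]
  · rw [Nat.min_eq_right h, mul_comm, Uc_mul_le B K b a h]
    exact Finset.sum_congr rfl fun i _ => by rw [Nat.add_comm b a]

end aux

/-- The multiplication rule of the dual canonical basis of `Ũ^ι_v(sl₂)`:
for `0 ≤ v₁ ≤ ⌊w₁/2⌋` and `0 ≤ v₂ ≤ ⌊w₂/2⌋`,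
`L(v₁,w₁) L(v₂,w₂) = ∑_{v=v₁+v₂}^{m} L(v, w₁+w₂)` where
`m = min{w₁-v₁+v₂, w₂-v₂+v₁, ⌊(w₁+w₂)/2⌋}`. -/
theorem dual_canonical_basis_multiplication {A : Type*} [CommRing A] (B K : A)
    (v₁ w₁ v₂ w₂ : ℕ) (h₁ : v₁ ≤ w₁ / 2) (h₂ : v₂ ≤ w₂ / 2) :
    Lel B K v₁ w₁ * Lel B K v₂ w₂ =
      ∑ v ∈ Finset.Icc (v₁ + v₂)
          (min (w₁ - v₁ + v₂) (min (w₂ - v₂ + v₁) ((w₁ + w₂) / 2))),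
        Lel B K v (w₁ + w₂) := by
  set a := w₁ - 2 * v₁ with ha
  set b := w₂ - 2 * v₂ with hb
  have h1 : 2 * v₁ ≤ w₁ := by omega
  have h2 : 2 * v₂ ≤ w₂ := by omega
  have hm : min (w₁ - v₁ + v₂) (min (w₂ - v₂ + v₁) ((w₁ + w₂) / 2))
      = v₁ + v₂ + min a b := by omega
  rw [hm, Lel_eq_Uc B K v₁ w₁ h₁, Lel_eq_Uc B K v₂ w₂ h₂,
    ← Finset.Ico_add_one_right_eq_Icc, Finset.sum_Ico_eq_sum_range]
  have hr : v₁ + v₂ + min a b + 1 - (v₁ + v₂) = min a b + 1 := by omega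
  rw [hr]
  have key : ∀ i ∈ Finset.range (min a b + 1),
      Lel B K (v₁ + v₂ + i) (w₁ + w₂)
        = K ^ (v₁ + v₂) * (K ^ i * Uc B K (a + b - 2*i)) := by
    intro i hi
    rw [Finset.mem_range] at hi
    have hle : v₁ + v₂ + i ≤ (w₁ + w₂) / 2 := by omega
    rw [Lel_eq_Uc B K _ _ hle]
    have e1 : w₁ + w₂ - 2 * (v₁ + v₂ + i) = a + b - 2*i := by
      clear hm hr hle h₁ h₂; omega
    rw [e1, pow_add, mul_assoc]
  rw [Finset.sum_congr rfl key, ← Finset.mul_sum, ← Uc_mul]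
  ring
end
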